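/- arXiv:2106.06128 — 5 statements merged into one kernel-verified Lean document; each statement's English description precedes it below -/
import Mathlib

section
/- Let M be an n×n real symmetric positive definite matrix such that every entry of M^{-1} is nonnegative, let b ∈ ℝⁿ be a vector, and let i be an index with (M^{-1}b)_i ≤ 1. Then 𝟏ᵀ(M + e_i e_iᵀ)^{-1}(b + e_i) ≥ 𝟏ᵀM^{-1}b; that is, the increment Δ(e) = (𝟏ᵀM^{-1}e_i)(1 − e_iᵀM^{-1}b)/(1 + e_iᵀM^{-1}e_i) of the overall opinion caused by adding one edge incident to follower i is nonnegative. -/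
/-!
By Sherman–Morrison, `(M + uvᵀ)⁻¹ (b + u) = M⁻¹ b + c M⁻¹ u` with
`c = (1 - vᵀ M⁻¹ b) / (1 + vᵀ M⁻¹ u)`, so adding the edge changes `𝟏ᵀ M⁻¹ b` by exactly `Δ(e)`.
For `u = v = eᵢ` the denominator `1 + (M⁻¹)ᵢᵢ` is positive and `𝟏ᵀ M⁻¹ eᵢ` is a column sum of
`M⁻¹`, both nonnegative, while `(M⁻¹ b)ᵢ ≤ 1` makes the numerator of `c` nonnegative.
-/

open Matrix

namespace Matrix

variable {m K : Type*} [Fintype m] [DecidableEq m] [Field K]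

theorem det_add_vecMulVec {M : Matrix m m K} (hM : IsUnit M.det) (u v : m → K) :
    (M + vecMulVec u v).det = M.det * (1 + v ⬝ᵥ (M⁻¹ *ᵥ u)) := by
  rw [vecMulVec_eq Unit, det_add_replicateCol_mul_replicateRow hM]
  simp [Matrix.mul_assoc, mulVec, dotProduct, mul_apply]

theorem inv_add_vecMulVec_mulVec_add {M : Matrix m m K} (hM : IsUnit M.det) (u v b : m → K)
    (h : 1 + v ⬝ᵥ (M⁻¹ *ᵥ u) ≠ 0) :
    (M + vecMulVec u v)⁻¹ *ᵥ (b + u) =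
      M⁻¹ *ᵥ b + ((1 - v ⬝ᵥ (M⁻¹ *ᵥ b)) / (1 + v ⬝ᵥ (M⁻¹ *ᵥ u))) • (M⁻¹ *ᵥ u) := by
  set c := (1 - v ⬝ᵥ (M⁻¹ *ᵥ b)) / (1 + v ⬝ᵥ (M⁻¹ *ᵥ u))
  have hN : IsUnit (M + vecMulVec u v).det := by
    rw [det_add_vecMulVec hM, isUnit_iff_ne_zero]
    exact mul_ne_zero hM.ne_zero h
  have hc : v ⬝ᵥ (M⁻¹ *ᵥ b) + c * (v ⬝ᵥ (M⁻¹ *ᵥ u)) + c = 1 := by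
    unfold c; field_simp; ring
  rw [← (mulVec_injective_of_isUnit ((isUnit_iff_isUnit_det _).mpr hN)).eq_iff, mulVec_mulVec,
    mul_nonsing_inv _ hN, one_mulVec]
  rw [mulVec_add, mulVec_smul, add_mulVec, add_mulVec, vecMulVec_mulVec, vecMulVec_mulVec,
    mulVec_mulVec, mulVec_mulVec, mul_nonsing_inv _ hM, one_mulVec, one_mulVec]
  ext j
  simp only [Pi.add_apply, op_smul_eq_smul, smul_add, Pi.smul_apply, smul_eq_mul]
  linear_combination (-u j) * hc

theorem dotProduct_inv_add_vecMulVec_mulVec_add {M : Matrix m m K} (hM : IsUnit M.det)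
    (u v b w : m → K) (h : 1 + v ⬝ᵥ (M⁻¹ *ᵥ u) ≠ 0) :
    w ⬝ᵥ ((M + vecMulVec u v)⁻¹ *ᵥ (b + u)) =
      w ⬝ᵥ (M⁻¹ *ᵥ b) + (w ⬝ᵥ (M⁻¹ *ᵥ u)) * (1 - v ⬝ᵥ (M⁻¹ *ᵥ b)) / (1 + v ⬝ᵥ (M⁻¹ *ᵥ u)) := by
  rw [inv_add_vecMulVec_mulVec_add hM u v b h, dotProduct_add, dotProduct_smul, smul_eq_mul]
  ring

end Matrix

/-- Let `M` be an `n × n` real symmetric positive definite matrix such that every entry of `M⁻¹`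
is nonnegative, `b ∈ ℝⁿ` a vector, and `i` an index with `(M⁻¹ b)ᵢ ≤ 1`.  Then
`𝟏ᵀ (M + eᵢ eᵢᵀ)⁻¹ (b + eᵢ) ≥ 𝟏ᵀ M⁻¹ b`; that is, the increment
`Δ(e) = (𝟏ᵀ M⁻¹ eᵢ)(1 − eᵢᵀ M⁻¹ b) / (1 + eᵢᵀ M⁻¹ eᵢ)` of the overall opinion caused by
adding one edge incident to follower `i` is nonnegative. -/
theorem stmt1 {n : ℕ} (M : Matrix (Fin n) (Fin n) ℝ) (hM : M.PosDef)
    (hnn : ∀ a c : Fin n, 0 ≤ M⁻¹ a c)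
    (b : Fin n → ℝ) (i : Fin n) (hb : (M⁻¹ *ᵥ b) i ≤ 1) :
    (1 : Fin n → ℝ) ⬝ᵥ (M⁻¹ *ᵥ b)
      ≤ (1 : Fin n → ℝ) ⬝ᵥ ((M + vecMulVec (Pi.single i 1) (Pi.single i 1))⁻¹
          *ᵥ (b + Pi.single i 1)) ∧
    0 ≤ ((1 : Fin n → ℝ) ⬝ᵥ (M⁻¹ *ᵥ Pi.single i 1))
          * (1 - Pi.single i 1 ⬝ᵥ (M⁻¹ *ᵥ b))
          / (1 + Pi.single i 1 ⬝ᵥ (M⁻¹ *ᵥ Pi.single i 1)) := by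
  have hden : 0 < 1 + Pi.single i 1 ⬝ᵥ (M⁻¹ *ᵥ Pi.single i 1) := by
    rw [single_one_dotProduct, mulVec_single_one, col_apply]
    linarith [hnn i i]
  have hcol : 0 ≤ (1 : Fin n → ℝ) ⬝ᵥ (M⁻¹ *ᵥ Pi.single i 1) := by
    rw [mulVec_single_one]
    exact Finset.sum_nonneg fun a _ => mul_nonneg zero_le_one (hnn a i)
  have hgain : 0 ≤ 1 - Pi.single i 1 ⬝ᵥ (M⁻¹ *ᵥ b) := by
    rw [single_one_dotProduct]
    linarith
  have hΔ := div_nonneg (mul_nonneg hcol hgain) hden.le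
  refine ⟨?_, hΔ⟩
  rw [dotProduct_inv_add_vecMulVec_mulVec_add ((isUnit_iff_isUnit_det M).mp hM.isUnit) _ _ b 1
    hden.ne']
  exact le_add_of_nonneg_right hΔ
end

section
/- (Monotonicity) Under the grounded Laplacian setup, for any two subsets B ⊆ T ⊆ Q of the candidate edge set, H(B) ≤ H(T). -/
/-!
Write `x_c = (L_F + diag c)⁻¹ (b + c)`, so that `H(P) = 𝟏ᵀ x_{c_P}`. The matrix `L_F + diag c` is
a positive definite Z-matrix, hence has an entrywise nonnegative inverse. As the row sums of `L_F`
count all edges from `F` to `S`, they dominate `b`, so `𝟏 - x_c = (L_F + diag c)⁻¹ (L_F 𝟏 - b) ≥ 0`.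
For `c ≤ c'` the residual of `x_c` in the system for `c'` is `(c' - c) * (𝟏 - x_c) ≥ 0`, whence
`x_c ≤ x_{c'}` entrywise; and `B ⊆ T` gives `c_B ≤ c_T`.
-/

open Matrix Finset

namespace Matrix

variable {n : Type*}

def IsZMatrix (M : Matrix n n ℝ) : Prop := Pairwise fun i j => M i j ≤ 0

lemma IsZMatrix.add_diagonal [DecidableEq n] {M : Matrix n n ℝ} (hM : M.IsZMatrix) (d : n → ℝ) :
    (M + diagonal d).IsZMatrix := fun i j hij => by
  simpa [diagonal_apply_ne _ hij] using hM hij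

lemma IsZMatrix.submatrix {m : Type*} {M : Matrix n n ℝ} (hM : M.IsZMatrix) {f : m → n}
    (hf : Function.Injective f) : (M.submatrix f f).IsZMatrix :=
  fun _ _ hij => hM (hf.ne hij)

lemma PosDef.add_diagonal [DecidableEq n] {L : Matrix n n ℝ} (hL : L.PosDef) {c : n → ℝ}
    (hc : 0 ≤ c) : (L + diagonal c).PosDef :=
  hL.add_posSemidef (posSemidef_diagonal_iff.mpr hc)

variable [Fintype n]

lemma IsZMatrix.dotProduct_mulVec_nonpos {M : Matrix n n ℝ} (hM : M.IsZMatrix) {u v : n → ℝ}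
    (hu : 0 ≤ u) (hv : 0 ≤ v) (huv : ∀ i, u i * v i = 0) : u ⬝ᵥ (M *ᵥ v) ≤ 0 := by
  simp only [dotProduct, mulVec, mul_sum]
  refine sum_nonpos fun i _ => sum_nonpos fun j _ => ?_
  rcases eq_or_ne i j with rfl | hij
  · rw [mul_left_comm, huv, mul_zero]
  · exact mul_nonpos_of_nonneg_of_nonpos (hu i) (mul_nonpos_of_nonpos_of_nonneg (hM hij) (hv j))

lemma PosDef.mulVec_inv_mulVec [DecidableEq n] {M : Matrix n n ℝ} (hM : M.PosDef) (v : n → ℝ) :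
    M *ᵥ (M⁻¹ *ᵥ v) = v := by
  rw [mulVec_mulVec, mul_nonsing_inv _ ((isUnit_iff_isUnit_det M).mp hM.isUnit), one_mulVec]

lemma PosDef.inv_mulVec_mulVec [DecidableEq n] {M : Matrix n n ℝ} (hM : M.PosDef) (v : n → ℝ) :
    M⁻¹ *ᵥ (M *ᵥ v) = v := by
  rw [mulVec_mulVec, nonsing_inv_mul _ ((isUnit_iff_isUnit_det M).mp hM.isUnit), one_mulVec]

/-- Positive definite Z-matrices are M-matrices. Pairing `M x = y` with the negative part `x⁻`
gives `x⁻ ⬝ᵥ M x⁻ = x⁻ ⬝ᵥ M x⁺ - x⁻ ⬝ᵥ y ≤ 0`, so `x⁻ = 0`. -/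
theorem PosDef.inv_mulVec_nonneg [DecidableEq n] {M : Matrix n n ℝ} (hM : M.PosDef)
    (hZ : M.IsZMatrix) {y : n → ℝ} (hy : 0 ≤ y) : 0 ≤ M⁻¹ *ᵥ y := by
  set x := M⁻¹ *ᵥ y
  rw [← negPart_eq_zero]
  by_contra hne
  have hpos : 0 < x⁻ ⬝ᵥ (M *ᵥ x⁻) := by simpa using hM.dotProduct_mulVec_pos hne
  have hcross : x⁻ ⬝ᵥ (M *ᵥ x⁺) ≤ 0 := by
    refine hZ.dotProduct_mulVec_nonpos (negPart_nonneg x) (posPart_nonneg x) fun i => ?_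
    rcases le_total 0 (x i) with h | h <;> simp [h]
  have hrhs : 0 ≤ x⁻ ⬝ᵥ y := dotProduct_nonneg_of_nonneg (negPart_nonneg x) hy
  have hsplit : x⁻ ⬝ᵥ (M *ᵥ x⁻) = x⁻ ⬝ᵥ (M *ᵥ x⁺) - x⁻ ⬝ᵥ y := by
    have hx : x⁺ - x = x⁻ := by linear_combination posPart_sub_negPart x
    rw [← hM.mulVec_inv_mulVec y, ← dotProduct_sub, ← mulVec_sub, hx]
  linarith

lemma diagonal_mulVec_eq_mul [DecidableEq n] (d v : n → ℝ) : diagonal d *ᵥ v = d * v :=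
  funext (mulVec_diagonal d v)

section Grounded

variable [DecidableEq n] {L : Matrix n n ℝ} {b c c' : n → ℝ}

lemma PosDef.inv_add_diagonal_mulVec_le_one (hL : L.PosDef) (hZ : L.IsZMatrix)
    (hb : b ≤ L *ᵥ 1) (hc : 0 ≤ c) :
    (L + diagonal c)⁻¹ *ᵥ (b + c) ≤ 1 := by
  have hM := hL.add_diagonal hc
  have hgap : 1 - (L + diagonal c)⁻¹ *ᵥ (b + c) = (L + diagonal c)⁻¹ *ᵥ (L *ᵥ 1 - b) := by
    conv_lhs => rw [← hM.inv_mulVec_mulVec 1]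
    rw [← mulVec_sub, add_mulVec, diagonal_mulVec_eq_mul, mul_one, add_sub_add_right_eq_sub]
  exact sub_nonneg.mp (hgap ▸ hM.inv_mulVec_nonneg (hZ.add_diagonal c) (sub_nonneg.mpr hb))

theorem PosDef.inv_add_diagonal_mulVec_mono (hL : L.PosDef) (hZ : L.IsZMatrix)
    (hb : b ≤ L *ᵥ 1) (hc : 0 ≤ c) (hcc' : c ≤ c') :
    (L + diagonal c)⁻¹ *ᵥ (b + c) ≤ (L + diagonal c')⁻¹ *ᵥ (b + c') := by
  set x := (L + diagonal c)⁻¹ *ᵥ (b + c)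
  have hM' := hL.add_diagonal (hc.trans hcc')
  have hresidual : b + c' - (L + diagonal c') *ᵥ x = (c' - c) * (1 - x) := by
    have hMx : (L + diagonal c) *ᵥ x = b + c := (hL.add_diagonal hc).mulVec_inv_mulVec _
    rw [add_mulVec, diagonal_mulVec_eq_mul] at hMx ⊢
    linear_combination -hMx
  have hdiff : (L + diagonal c')⁻¹ *ᵥ (b + c') - x
      = (L + diagonal c')⁻¹ *ᵥ (b + c' - (L + diagonal c') *ᵥ x) := by
    rw [mulVec_sub, hM'.inv_mulVec_mulVec]
  refine sub_nonneg.mp (hdiff ▸ hM'.inv_mulVec_nonneg (hZ.add_diagonal c') ?_)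
  rw [hresidual]
  exact mul_nonneg (sub_nonneg.mpr hcc')
    (sub_nonneg.mpr (hL.inv_add_diagonal_mulVec_le_one hZ hb hc))

end Grounded

end Matrix

namespace SimpleGraph

variable {V : Type*} [Fintype V] [DecidableEq V] (G : SimpleGraph V) [DecidableRel G.Adj]

lemma lapMatrix_apply_of_ne {u v : V} (huv : u ≠ v) :
    G.lapMatrix ℝ u v = -(if G.Adj u v then 1 else 0) := by
  simp [lapMatrix, degMatrix, diagonal_apply_ne _ huv, adjMatrix_apply]

lemma isZMatrix_lapMatrix : (G.lapMatrix ℝ).IsZMatrix := fun u v huv => by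
  change G.lapMatrix ℝ u v ≤ 0
  rw [G.lapMatrix_apply_of_ne huv]
  split_ifs <;> norm_num

/-- The rows of the full Laplacian sum to zero. -/
lemma lapMatrix_submatrix_mulVec_one_apply (F : Finset V) (i : F) :
    (((G.lapMatrix ℝ).submatrix (↑) (↑) : Matrix F F ℝ) *ᵥ 1) i = #{v ∈ Fᶜ | G.Adj i v} := by
  have hrow : ∑ v, G.lapMatrix ℝ i v = 0 := by
    simpa [mulVec, dotProduct] using congrFun (G.lapMatrix_mulVec_const_eq_zero (R := ℝ)) i
  have hout : ∑ v ∈ Fᶜ, G.lapMatrix ℝ i v = -#{v ∈ Fᶜ | G.Adj i v} := by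
    rw [sum_congr rfl fun v hv => G.lapMatrix_apply_of_ne
      (ne_of_mem_of_not_mem i.2 (mem_compl.mp hv)), sum_neg_distrib,
      sum_boole]
  rw [← sum_add_sum_compl F, hout] at hrow
  simp only [mulVec, dotProduct, submatrix_apply, Pi.one_apply, mul_one]
  rw [sum_coe_sort F (G.lapMatrix ℝ i)]
  linarith

lemma card_filter_adj_le_lapMatrix_submatrix_mulVec_one_apply {F S : Finset V}
    (hFS : Disjoint F S) (i : F) :
    (#{a ∈ S | G.Adj a i} : ℝ) ≤ (((G.lapMatrix ℝ).submatrix (↑) (↑) : Matrix F F ℝ) *ᵥ 1) i := by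
  rw [G.lapMatrix_submatrix_mulVec_one_apply]
  refine Nat.cast_le.mpr (card_le_card fun a ha => ?_)
  simp only [mem_filter, mem_compl] at ha ⊢
  exact ⟨disjoint_right.mp hFS ha.1, ha.2.symm⟩

end SimpleGraph

theorem stmt3_general {V : Type} [Fintype V] [DecidableEq V]
    (G : SimpleGraph V) [DecidableRel G.Adj]
    (F S1 : Finset V)
    (hFS1 : Disjoint F S1)
    (LF : Matrix F F ℝ)
    (hLF : LF = (G.lapMatrix ℝ).submatrix (fun i : F => (i : V)) (fun i : F => (i : V)))
    (hPD : LF.PosDef)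
    (b : F → ℝ)
    (hb : ∀ i : F, b i = ((S1.filter fun a => G.Adj a (i : V)).card : ℝ))
    (Q : Finset (V × V))
    (c : Finset (V × V) → F → ℝ)
    (hc : ∀ P, ∀ i : F, c P i = ((P.filter fun e => e.2 = (i : V)).card : ℝ))
    (H : Finset (V × V) → ℝ)
    (hH : ∀ P ⊆ Q, H P = (1 : F → ℝ) ⬝ᵥ ((LF + Matrix.diagonal (c P))⁻¹ *ᵥ (b + c P)))
    (B T : Finset (V × V)) (hBT : B ⊆ T) (hTQ : T ⊆ Q) :
    H B ≤ H T := by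
  have hZ : LF.IsZMatrix := hLF ▸ G.isZMatrix_lapMatrix.submatrix Subtype.val_injective
  have hb_le : b ≤ LF *ᵥ 1 := fun i => by
    rw [hb, hLF]
    exact G.card_filter_adj_le_lapMatrix_submatrix_mulVec_one_apply hFS1 i
  have hc_nonneg : 0 ≤ c B := fun i => by
    rw [hc]
    positivity
  have hc_mono : c B ≤ c T := fun i => by
    rw [hc, hc]
    exact Nat.cast_le.mpr (card_le_card (filter_subset_filter _ hBT))
  rw [hH B (hBT.trans hTQ), hH T hTQ]
  exact dotProduct_le_dotProduct_of_nonneg_left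
    (hPD.inv_add_diagonal_mulVec_mono hZ hb_le hc_nonneg hc_mono) zero_le_one

/-- **Monotonicity.** Under the grounded Laplacian setup, for any two subsets `B ⊆ T ⊆ Q` of the
candidate edge set, `H(B) ≤ H(T)`, where for `P ⊆ Q` the overall opinion is
`H(P) = 𝟏ᵀ (L_F + diag(c_P))⁻¹ (b + c_P)` and `(c_P)ᵢ = |{a ∈ S₁ : (a,i) ∈ P}|`. -/
theorem stmt3 {V : Type} [Fintype V] [DecidableEq V]
    (G : SimpleGraph V) [DecidableRel G.Adj] (hconn : G.Connected)
    (F S0 S1 : Finset V)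
    (hFne : F.Nonempty) (hS1ne : S1.Nonempty)
    (hFS0 : Disjoint F S0) (hFS1 : Disjoint F S1) (hS0S1 : Disjoint S0 S1)
    (hcover : F ∪ S0 ∪ S1 = Finset.univ)
    (LF : Matrix F F ℝ)
    (hLF : LF = (G.lapMatrix ℝ).submatrix (fun i : F => (i : V)) (fun i : F => (i : V)))
    (hPD : LF.PosDef) (hnn : ∀ i j : F, 0 ≤ LF⁻¹ i j)
    (b : F → ℝ)
    (hb : ∀ i : F, b i = ((S1.filter fun a => G.Adj a (i : V)).card : ℝ))
    (Q : Finset (V × V))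
    (hQ : ∀ e ∈ Q, e.1 ∈ S1 ∧ e.2 ∈ F ∧ ¬ G.Adj e.1 e.2)
    (c : Finset (V × V) → F → ℝ)
    (hc : ∀ P, ∀ i : F, c P i = ((P.filter fun e => e.2 = (i : V)).card : ℝ))
    (H : Finset (V × V) → ℝ)
    (hH : ∀ P ⊆ Q, H P = (1 : F → ℝ) ⬝ᵥ ((LF + Matrix.diagonal (c P))⁻¹ *ᵥ (b + c P)))
    (B T : Finset (V × V)) (hBT : B ⊆ T) (hTQ : T ⊆ Q) :
    H B ≤ H T :=
  stmt3_general G F S1 hFS1 LF hLF hPD b hb Q c hc H hH B T hBT hTQ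
end

section
/- Under the grounded Laplacian setup, for every vector v ∈ ℝ^F and every follower i ∈ F: v_i² ≤ n · (vᵀ L_F v), where n = |V|. -/
open Matrix Finset

lemma walk_telescope {V : Type} (G : SimpleGraph V) (x : V → ℝ) {a b : V} (p : G.Walk a b) :
    x a - x b = (p.darts.map (fun d => x d.toProd.1 - x d.toProd.2)).sum := by
  induction p with
  | nil => simp
  | cons h q ih =>
    rw [SimpleGraph.Walk.darts_cons, List.map_cons, List.sum_cons, ← ih]
    simp

/-- Under the grounded Laplacian setup, for every vector `v ∈ ℝ^F` and every follower `i ∈ F`: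
`vᵢ² ≤ n · (vᵀ L_F v)`, where `n = |V|`. -/
theorem stmt8 {V : Type} [Fintype V] [DecidableEq V]
    (G : SimpleGraph V) [DecidableRel G.Adj] (hconn : G.Connected)
    (F S0 S1 : Finset V)
    (hFne : F.Nonempty) (hS1ne : S1.Nonempty)
    (hFS0 : Disjoint F S0) (hFS1 : Disjoint F S1) (hS0S1 : Disjoint S0 S1)
    (hcover : F ∪ S0 ∪ S1 = Finset.univ)
    (LF : Matrix F F ℝ)
    (hLF : LF = (G.lapMatrix ℝ).submatrix (fun i : F => (i : V)) (fun i : F => (i : V)))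
    (v : F → ℝ) (i : F) :
    (v i) ^ 2 ≤ (Fintype.card V : ℝ) * (v ⬝ᵥ (LF *ᵥ v)) := by
  classical
  obtain ⟨s, hs⟩ := hS1ne
  have hsF : s ∉ F := fun h => (Finset.disjoint_left.mp hFS1) h hs
  set x : V → ℝ := fun u => if h : u ∈ F then v ⟨u, h⟩ else 0 with hx
  have hx0 : ∀ u : V, u ∉ F → x u = 0 := fun u hu => dif_neg hu
  set Q : ℝ := (∑ a : V, ∑ b : V, if G.Adj a b then (x a - x b)^2 else 0)/2 with hQdef
  -- Step 1: quadratic form identity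
  have hA : v ⬝ᵥ LF *ᵥ v = Q := by
    have h1 : v ⬝ᵥ LF *ᵥ v = x ⬝ᵥ (G.lapMatrix ℝ) *ᵥ x := by
      calc v ⬝ᵥ LF *ᵥ v = ∑ a : F, ∑ b : F, v a * (LF a b * v b) := by
            simp [dotProduct, mulVec, dotProduct, Finset.mul_sum]
        _ = ∑ a : F, ∑ b : F, x (a : V) * (G.lapMatrix ℝ (a : V) (b : V) * x (b : V)) := by
            subst hLF
            refine Finset.sum_congr rfl fun a _ => Finset.sum_congr rfl fun b _ => ?_
            simp [hx, a.2, b.2, Matrix.submatrix_apply]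
        _ = ∑ a ∈ F, ∑ b ∈ F, x a * (G.lapMatrix ℝ a b * x b) := by
            rw [← Finset.sum_coe_sort F (fun a => ∑ b ∈ F, x a * (G.lapMatrix ℝ a b * x b))]
            exact Finset.sum_congr rfl fun a _ =>
              (Finset.sum_coe_sort F (fun b => x (a : V) * (G.lapMatrix ℝ (a : V) b * x b)))
        _ = ∑ a : V, ∑ b : V, x a * (G.lapMatrix ℝ a b * x b) := by
            rw [Finset.sum_subset (Finset.subset_univ F)
              (fun u _ hu => by simp [hx0 u hu])]
            exact Finset.sum_congr rfl fun a _ =>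
              Finset.sum_subset (Finset.subset_univ F) (fun w _ hw => by simp [hx0 w hw])
        _ = x ⬝ᵥ (G.lapMatrix ℝ) *ᵥ x := by
            simp [dotProduct, mulVec, dotProduct, Finset.mul_sum]
    rw [h1, ← Matrix.toLinearMap₂'_apply', SimpleGraph.lapMatrix_toLinearMap₂']
  -- Path from i to s
  obtain ⟨w0⟩ := hconn.preconnected (i : V) s
  set w : G.Walk (i : V) s := w0.bypass with hw
  have hwp : w.IsPath := SimpleGraph.Walk.bypass_isPath w0
  have hednd : w.edges.Nodup := hwp.edges_nodup
  have hdnd : w.darts.Nodup := by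
    have := hednd
    rw [SimpleGraph.Walk.edges] at this
    exact this.of_map _
  have hnd : (w.darts.map SimpleGraph.Dart.toProd).Nodup :=
    hdnd.map SimpleGraph.Dart.toProd_injective
  set D : Finset (V × V) := (w.darts.map SimpleGraph.Dart.toProd).toFinset with hD
  have hcardD : (D.card : ℝ) = w.length := by
    rw [hD, List.toFinset_card_of_nodup hnd, List.length_map, SimpleGraph.Walk.length_darts]
  -- membership facts
  have hDadj : ∀ p ∈ D, G.Adj p.1 p.2 := by
    intro p hp
    rw [hD, List.mem_toFinset, List.mem_map] at hp
    obtain ⟨d, _, rfl⟩ := hp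
    exact d.adj
  have hDswap : ∀ p ∈ D, p.swap ∉ D := by
    intro p hp hps
    rw [hD, List.mem_toFinset, List.mem_map] at hp hps
    obtain ⟨d, hd, rfl⟩ := hp
    obtain ⟨d', hd', hd'e⟩ := hps
    have hedge : d.edge = d'.edge := by
      rw [SimpleGraph.Dart.edge, SimpleGraph.Dart.edge, hd'e]
      exact (Sym2.mk_prod_swap_eq).symm
    have : d = d' := by
      have hinj := List.inj_on_of_nodup_map (f := SimpleGraph.Dart.edge) (l := w.darts)
        (by rw [← SimpleGraph.Walk.edges]; exact hednd)
      exact hinj hd hd' hedge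
    subst this
    have : d.toProd.1 = d.toProd.2 := by
      have := congrArg Prod.fst hd'e
      simpa using this.symm
    exact G.irrefl (this ▸ d.adj)
  -- telescoping
  have htel : x (i : V) - x s = ∑ p ∈ D, (x p.1 - x p.2) := by
    rw [walk_telescope G x w, hD,
      List.sum_toFinset _ hnd, List.map_map]
    rfl
  have hxi : x (i : V) = v i := by simp [hx, i.2]
  have hxs : x s = 0 := hx0 s hsF
  -- key: sum over D of squares ≤ Q
  have hkey : ∑ p ∈ D, (x p.1 - x p.2)^2 ≤ Q := by
    set g : V × V → ℝ := fun p => (x p.1 - x p.2)^2 with hg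
    set h : V × V → ℝ := fun p => if G.Adj p.1 p.2 then g p else 0 with hh
    have hdisj : Disjoint D (D.image Prod.swap) := by
      rw [Finset.disjoint_left]
      intro p hp hp'
      rw [Finset.mem_image] at hp'
      obtain ⟨q, hq, rfl⟩ := hp'
      exact hDswap q hq (by simpa using hp)
    have hsum2 : ∑ p ∈ D ∪ D.image Prod.swap, g p = 2 * ∑ p ∈ D, g p := by
      rw [Finset.sum_union hdisj, Finset.sum_image (fun a _ b _ h => Prod.swap_injective h)]
      have : ∀ p, g p.swap = g p := by
        intro p; simp only [hg, Prod.fst_swap, Prod.snd_swap]; ring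
      rw [Finset.sum_congr rfl fun p _ => this p]; ring
    have hgh : ∀ p ∈ D ∪ D.image Prod.swap, g p = h p := by
      intro p hp
      rcases Finset.mem_union.mp hp with hp | hp
      · rw [hh]; simp [hDadj p hp]
      · rw [Finset.mem_image] at hp
        obtain ⟨q, hq, rfl⟩ := hp
        rw [hh]; simp [(hDadj q hq).symm]
    have hle : ∑ p ∈ D ∪ D.image Prod.swap, h p ≤ ∑ p : V × V, h p := by
      apply Finset.sum_le_sum_of_subset_of_nonneg (Finset.subset_univ _)
      intro p _ _
      rw [hh]
      positivity
    have huniv : ∑ p : V × V, h p = 2 * Q := by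
      rw [hQdef, Fintype.sum_prod_type]
      ring
    have : 2 * ∑ p ∈ D, g p ≤ 2 * Q := by
      rw [← hsum2, ← huniv]
      calc ∑ p ∈ D ∪ D.image Prod.swap, g p
          = ∑ p ∈ D ∪ D.image Prod.swap, h p := Finset.sum_congr rfl hgh
        _ ≤ ∑ p : V × V, h p := hle
    linarith
  have hQnn : 0 ≤ Q := by
    rw [hQdef]
    positivity
  have hDnn : 0 ≤ ∑ p ∈ D, (x p.1 - x p.2)^2 := Finset.sum_nonneg fun p _ => sq_nonneg _
  have hCS : (v i)^2 ≤ (D.card : ℝ) * ∑ p ∈ D, (x p.1 - x p.2)^2 := by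
    have := sq_sum_le_card_mul_sum_sq (s := D) (f := fun p => x p.1 - x p.2)
    calc (v i)^2 = (∑ p ∈ D, (x p.1 - x p.2))^2 := by rw [← htel, hxi, hxs, sub_zero]
      _ ≤ (D.card : ℝ) * ∑ p ∈ D, (x p.1 - x p.2)^2 := by exact_mod_cast this
  have hcard_le : (D.card : ℝ) ≤ (Fintype.card V : ℝ) := by
    rw [hcardD]
    exact_mod_cast hwp.length_lt.le
  calc (v i)^2 ≤ (D.card : ℝ) * ∑ p ∈ D, (x p.1 - x p.2)^2 := hCS
    _ ≤ (Fintype.card V : ℝ) * Q := by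
        apply mul_le_mul hcard_le hkey hDnn (by positivity)
    _ = (Fintype.card V : ℝ) * (v ⬝ᵥ LF *ᵥ v) := by rw [hA]
end

section
/- Under the grounded Laplacian setup with n ≥ 2, let 0 < ε < 1/2, 1/2 < η < 1, and δ₂ = (1−η)ε/(n²√(6(n²−1))). Let p̃ = L_F^{-1}b and suppose p ∈ ℝ^F satisfies ‖p − p̃‖_{L_F} ≤ δ₂ ‖p̃‖_{L_F}. Then for every i ∈ F with p̃_i ≤ η: (1 − ε/6)(1 − p̃_i) ≤ 1 − p_i ≤ (1 + ε/6)(1 − p̃_i); that is, 1 − p_i is an (ε/6)-approximation of 1 − e_iᵀ L_F^{-1} b. -/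
/-!
Extending `y : F → ℝ` by zero turns `yᵀ L_F y` into the Laplacian energy of a function that
vanishes at a leader `s`, so Cauchy–Schwarz along a path from `i` to `s` gives
`y i ^ 2 ≤ 2 (n - 1) yᵀ L_F y`. Since `L_F 1` counts the neighbours outside `F`, `b ≤ L_F 1`, and
as `L_F⁻¹ ≥ 0` this gives `p̃ ≤ 1`; hence `‖p̃‖²_{L_F} = p̃ ⬝ b ≤ ∑ b ≤ n² / 4`. Together,
`(pᵢ - p̃ᵢ)² ≤ 2 (n - 1) δ₂² n² / 4 ≤ ((1 - η) ε / 6)²`, and `1 - η ≤ 1 - p̃ᵢ` turns this absolute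
error into the relative one.
-/

open Matrix Finset

namespace Matrix

variable {V R : Type*} [Fintype V] [CommSemiring R] {F : Finset V}

theorem comp_val_dotProduct (g : V → R) (y : F → R) :
    (g ∘ Subtype.val) ⬝ᵥ y = g ⬝ᵥ Subtype.val.extend y 0 := by
  rw [dotProduct, dotProduct, ← Finset.sum_subset (subset_univ F), ← Finset.sum_coe_sort F]
  · simp
  · intro v _ hv
    rw [Function.extend_apply' _ _ _ (by simpa using hv), Pi.zero_apply, mul_zero]

theorem submatrix_val_mulVec_apply (M : Matrix V V R) (y : F → R) (i : F) :
    (M.submatrix (↑) (↑) *ᵥ y) i = (M *ᵥ Subtype.val.extend y 0) i :=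
  comp_val_dotProduct (M i) y

theorem dotProduct_submatrix_val_mulVec (M : Matrix V V R) (y : F → R) :
    y ⬝ᵥ (M.submatrix (↑) (↑) *ᵥ y) =
      Subtype.val.extend y 0 ⬝ᵥ (M *ᵥ Subtype.val.extend y 0) := by
  rw [dotProduct_comm, dotProduct_comm _ (M *ᵥ _), ← comp_val_dotProduct]
  exact congrArg (· ⬝ᵥ y) (funext (submatrix_val_mulVec_apply M y))

theorem mulVec_mono_of_nonneg {m n S : Type*} [Fintype n] [Semiring S] [PartialOrder S]
    [IsOrderedRing S] {M : Matrix m n S} (hM : ∀ i j, 0 ≤ M i j) {x y : n → S}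
    (hxy : x ≤ y) : M *ᵥ x ≤ M *ᵥ y :=
  fun i => dotProduct_le_dotProduct_of_nonneg_left hxy (hM i)

theorem inv_mulVec_le_one {ι : Type*} [Fintype ι] [DecidableEq ι] {A : Matrix ι ι ℝ}
    (hA : IsUnit A.det) (hnn : ∀ i j, 0 ≤ A⁻¹ i j) {b : ι → ℝ} (hb : b ≤ A *ᵥ 1) :
    A⁻¹ *ᵥ b ≤ 1 := by
  simpa [mulVec_mulVec, nonsing_inv_mul _ hA] using mulVec_mono_of_nonneg hnn hb

end Matrix

namespace SimpleGraph

abbrev groundedLapMatrix {V : Type*} [Fintype V] [DecidableEq V] (G : SimpleGraph V)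
    [DecidableRel G.Adj] (F : Finset V) : Matrix F F ℝ :=
  (G.lapMatrix ℝ).submatrix (fun i : F => (i : V)) (fun i : F => (i : V))

variable {V : Type*} {G : SimpleGraph V}

theorem Walk.sq_sub_le_length_mul_sum_darts (x : V → ℝ) {u v : V} (w : G.Walk u v) :
    (x u - x v) ^ 2 ≤ w.length * (w.darts.map fun d => (x d.fst - x d.snd) ^ 2).sum := by
  induction w with
  | nil => simp
  | @cons u a v _ w ih =>
    simp only [darts_cons, List.map_cons, List.sum_cons, length_cons, Nat.cast_succ]
    have hQ : 0 ≤ (w.darts.map fun d => (x d.fst - x d.snd) ^ 2).sum :=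
      List.sum_nonneg (by simp [sq_nonneg])
    rcases (Nat.cast_nonneg (α := ℝ) w.length).eq_or_lt with hL | hL
    · rw [← hL] at ih ⊢
      nlinarith
    · nlinarith [sq_nonneg (w.length * (x u - x a) - (x a - x v))]

variable [Fintype V] [DecidableEq V] [DecidableRel G.Adj]

theorem Walk.sum_darts_le_of_nodup (x : V → ℝ) {u v : V} (w : G.Walk u v) (hw : w.darts.Nodup) :
    (w.darts.map fun d => (x d.fst - x d.snd) ^ 2).sum ≤
      2 * (x ⬝ᵥ (G.lapMatrix ℝ *ᵥ x)) := by
  -- `2 xᵀ L x` sums over ordered adjacent pairs, and distinct darts are distinct such pairs.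
  have hsum := G.lapMatrix_toLinearMap₂' ℝ x
  rw [toLinearMap₂'_apply'] at hsum
  set g : V × V → ℝ := fun q => if G.Adj q.1 q.2 then (x q.1 - x q.2) ^ 2 else 0
  have hdarts :
      (w.darts.map fun d => (x d.fst - x d.snd) ^ 2) = (w.darts.map Dart.toProd).map g := by
    simp only [List.map_map]
    exact List.map_congr_left fun d _ => (if_pos d.adj).symm
  rw [hsum, mul_div_cancel₀ _ two_ne_zero, ← Finset.sum_product', hdarts,
    ← List.sum_toFinset _ (hw.map Dart.toProd_injective)]
  refine Finset.sum_le_sum_of_subset_of_nonneg (subset_univ _) fun q _ _ => ?_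
  positivity

theorem sq_le_mul_dotProduct_lapMatrix_mulVec {x : V → ℝ} {u s : V} (hus : G.Reachable u s)
    (hs : x s = 0) :
    x u ^ 2 ≤ 2 * (Fintype.card V - 1) * (x ⬝ᵥ (G.lapMatrix ℝ *ᵥ x)) := by
  obtain ⟨w⟩ := hus
  have hpath := w.bypass_isPath
  have hlen : (w.bypass.length : ℝ) ≤ Fintype.card V - 1 := by
    rw [le_sub_iff_add_le]; exact_mod_cast hpath.length_lt
  calc x u ^ 2 = (x u - x s) ^ 2 := by rw [hs, sub_zero]
    _ ≤ w.bypass.length * (w.bypass.darts.map fun d => (x d.fst - x d.snd) ^ 2).sum :=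
      w.bypass.sq_sub_le_length_mul_sum_darts x
    _ ≤ (Fintype.card V - 1) * (2 * (x ⬝ᵥ (G.lapMatrix ℝ *ᵥ x))) := by
      gcongr
      · exact List.sum_nonneg (by simp [sq_nonneg])
      · linarith
      · exact w.bypass.sum_darts_le_of_nodup x
          (Walk.darts_nodup_of_support_nodup hpath.support_nodup)
    _ = _ := by ring

theorem sq_le_mul_dotProduct_groundedLapMatrix_mulVec (hconn : G.Connected) {F : Finset V}
    {s : V} (hs : s ∉ F) (y : F → ℝ) (i : F) :
    y i ^ 2 ≤ 2 * (Fintype.card V - 1) * (y ⬝ᵥ (G.groundedLapMatrix F *ᵥ y)) := by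
  rw [dotProduct_submatrix_val_mulVec, ← Subtype.val_injective.extend_apply y 0 i]
  exact sq_le_mul_dotProduct_lapMatrix_mulVec (hconn.preconnected _ s)
    (Function.extend_apply' _ _ _ (by simpa using hs))

theorem groundedLapMatrix_mulVec_one_apply (F : Finset V) (j : F) :
    (G.groundedLapMatrix F *ᵥ 1) j = #(G.neighborFinset j \ F) := by
  have hz : Subtype.val.extend (1 : F → ℝ) 0 = fun v => if v ∈ F then 1 else 0 := by
    funext v
    split_ifs with hv
    · exact Subtype.val_injective.extend_apply _ _ ⟨v, hv⟩
    · exact Function.extend_apply' _ _ _ (by simpa using hv)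
  rw [submatrix_val_mulVec_apply, lapMatrix_mulVec_apply, hz]
  simp only [SetLike.coe_mem, ↓reduceIte, mul_one, sum_ite_mem, sum_const, nsmul_eq_mul]
  rw [← card_neighborFinset_eq_degree, ← card_sdiff_add_card_inter _ F]
  push_cast
  ring

theorem card_filter_adj_le_groundedLapMatrix_mulVec_one {F T : Finset V} (hFT : Disjoint F T)
    (j : F) : (#{a ∈ T | G.Adj a j} : ℝ) ≤ (G.groundedLapMatrix F *ᵥ 1) j := by
  rw [groundedLapMatrix_mulVec_one_apply]
  gcongr
  intro a ha
  simp only [mem_filter] at ha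
  simp [ha.2.symm, disjoint_right.mp hFT ha.1]

theorem sum_card_filter_adj_le {F T : Finset V} (hFT : Disjoint F T) :
    ∑ j : F, (#{a ∈ T | G.Adj a j} : ℝ) ≤ Fintype.card V ^ 2 / 4 := by
  have hcard : (#F + #T : ℝ) ≤ Fintype.card V := by
    exact_mod_cast (card_union_of_disjoint hFT).symm.trans_le (card_le_univ _)
  calc ∑ j : F, (#{a ∈ T | G.Adj a j} : ℝ) ≤ ∑ j : F, (#T : ℝ) := by
        gcongr with j; exact filter_subset _ _
    _ = #F * #T := by simp
    _ ≤ Fintype.card V ^ 2 / 4 := by nlinarith [sq_nonneg ((#F : ℝ) - #T)]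

end SimpleGraph

theorem mul_sq_div_sq_mul_sqrt_le {m c : ℝ} (hm : 2 ≤ m) :
    2 * (m - 1) * (c / (m ^ 2 * √(6 * (m ^ 2 - 1)))) ^ 2 * (m ^ 2 / 4) ≤ (c / 6) ^ 2 := by
  have hm0 : m ≠ 0 := by positivity
  have hm1 : m ^ 2 - 1 ≠ 0 := by nlinarith
  rw [div_pow, mul_pow, Real.sq_sqrt (by nlinarith)]
  calc _ = c ^ 2 / (12 * m ^ 2 * (m + 1)) := by field_simp; ring
    _ ≤ c ^ 2 / 36 := by gcongr; nlinarith
    _ = (c / 6) ^ 2 := by ring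

theorem le_sq_mul_of_sqrt_le_mul_sqrt {a e δ : ℝ} (h : √a ≤ δ * √e) (ha : 0 ≤ a)
    (he : 0 ≤ e) : a ≤ δ ^ 2 * e :=
  calc a = √a ^ 2 := (Real.sq_sqrt ha).symm
    _ ≤ (δ * √e) ^ 2 := pow_le_pow_left₀ (Real.sqrt_nonneg a) h 2
    _ = δ ^ 2 * e := by rw [mul_pow, Real.sq_sqrt he]

theorem stmt12_general {V : Type} [Fintype V] [DecidableEq V]
    (G : SimpleGraph V) [DecidableRel G.Adj] (hconn : G.Connected)
    (F S1 : Finset V)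
    (hS1ne : S1.Nonempty)
    (hFS1 : Disjoint F S1)
    (n : ℕ) (hn : n = Fintype.card V) (hn2 : 2 ≤ n)
    (LF : Matrix F F ℝ)
    (hLF : LF = (G.lapMatrix ℝ).submatrix (fun i : F => (i : V)) (fun i : F => (i : V)))
    (hPD : LF.PosDef) (hnn : ∀ i j : F, 0 ≤ LF⁻¹ i j)
    (b : F → ℝ)
    (hb : ∀ i : F, b i = ((S1.filter fun a => G.Adj a (i : V)).card : ℝ))
    (ε : ℝ) (hε0 : 0 < ε)
    (η : ℝ) (hη1 : η < 1)
    (δ₂ : ℝ) (hδ₂ : δ₂ = (1 - η) * ε / ((n : ℝ) ^ 2 * Real.sqrt (6 * ((n : ℝ) ^ 2 - 1))))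
    (pt : F → ℝ) (hpt : pt = LF⁻¹ *ᵥ b)
    (p : F → ℝ)
    (hsolve : Real.sqrt ((p - pt) ⬝ᵥ (LF *ᵥ (p - pt)))
        ≤ δ₂ * Real.sqrt (pt ⬝ᵥ (LF *ᵥ pt))) :
    ∀ i : F, pt i ≤ η →
      (1 - ε / 6) * (1 - pt i) ≤ 1 - p i ∧ 1 - p i ≤ (1 + ε / 6) * (1 - pt i) := by
  intro i hi
  have hn' : (2 : ℝ) ≤ n := by exact_mod_cast hn2
  obtain ⟨s, hs⟩ := hS1ne
  have hdet : IsUnit LF.det := (isUnit_iff_isUnit_det LF).mp hPD.isUnit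
  have hb0 : 0 ≤ b := fun j => by rw [hb j]; positivity
  have hb1 : b ≤ LF *ᵥ 1 := fun j => by
    rw [hb j, hLF]; exact G.card_filter_adj_le_groundedLapMatrix_mulVec_one hFS1 j
  have hpt1 : pt ≤ 1 := hpt ▸ inv_mulVec_le_one hdet hnn hb1
  have henergy : pt ⬝ᵥ (LF *ᵥ pt) ≤ n ^ 2 / 4 :=
    calc pt ⬝ᵥ (LF *ᵥ pt) = pt ⬝ᵥ b := by
          rw [hpt, mulVec_mulVec, mul_nonsing_inv _ hdet, one_mulVec]
      _ ≤ 1 ⬝ᵥ b := dotProduct_le_dotProduct_of_nonneg_right hpt1 hb0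
      _ ≤ n ^ 2 / 4 := by
          simpa only [one_dotProduct, hb, hn] using G.sum_card_filter_adj_le hFS1
  have herr := le_sq_mul_of_sqrt_le_mul_sqrt hsolve
    (by simpa using hPD.posSemidef.dotProduct_mulVec_nonneg (p - pt))
    (by simpa using hPD.posSemidef.dotProduct_mulVec_nonneg pt)
  have hclose : (p i - pt i) ^ 2 ≤ (ε / 6 * (1 - η)) ^ 2 :=
    calc (p i - pt i) ^ 2 ≤ 2 * (n - 1) * ((p - pt) ⬝ᵥ (LF *ᵥ (p - pt))) := by
          simpa [hLF, hn] using G.sq_le_mul_dotProduct_groundedLapMatrix_mulVec hconn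
            (disjoint_right.mp hFS1 hs) (p - pt) i
      _ ≤ 2 * (n - 1) * (δ₂ ^ 2 * (n ^ 2 / 4)) := by
          gcongr
          · linarith
          · exact herr.trans (by gcongr)
      _ ≤ ((1 - η) * ε / 6) ^ 2 := by
          rw [hδ₂, ← mul_assoc]; exact mul_sq_div_sq_mul_sqrt_le hn'
      _ = (ε / 6 * (1 - η)) ^ 2 := by ring
  obtain ⟨hlo, hhi⟩ := abs_le_of_sq_le_sq' hclose (by nlinarith)
  have hslack : ε / 6 * (1 - η) ≤ ε / 6 * (1 - pt i) := by gcongr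
  constructor <;> linarith

/-- Under the grounded Laplacian setup with `n ≥ 2`, let `0 < ε < 1/2`, `1/2 < η < 1`, and
`δ₂ = (1−η)ε/(n²√(6(n²−1)))`.  Let `p̃ = L_F⁻¹ b` and suppose `p` satisfies
`‖p − p̃‖_{L_F} ≤ δ₂ ‖p̃‖_{L_F}`.  Then for every `i ∈ F` with `p̃ᵢ ≤ η`:
`(1 − ε/6)(1 − p̃ᵢ) ≤ 1 − pᵢ ≤ (1 + ε/6)(1 − p̃ᵢ)`, i.e. `1 − pᵢ` is an
`(ε/6)`-approximation of `1 − eᵢᵀ L_F⁻¹ b`. -/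
theorem stmt12 {V : Type} [Fintype V] [DecidableEq V]
    (G : SimpleGraph V) [DecidableRel G.Adj] (hconn : G.Connected)
    (F S0 S1 : Finset V)
    (hFne : F.Nonempty) (hS1ne : S1.Nonempty)
    (hFS0 : Disjoint F S0) (hFS1 : Disjoint F S1) (hS0S1 : Disjoint S0 S1)
    (hcover : F ∪ S0 ∪ S1 = Finset.univ)
    (n : ℕ) (hn : n = Fintype.card V) (hn2 : 2 ≤ n)
    (LF : Matrix F F ℝ)
    (hLF : LF = (G.lapMatrix ℝ).submatrix (fun i : F => (i : V)) (fun i : F => (i : V)))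
    (hPD : LF.PosDef) (hnn : ∀ i j : F, 0 ≤ LF⁻¹ i j)
    (b : F → ℝ)
    (hb : ∀ i : F, b i = ((S1.filter fun a => G.Adj a (i : V)).card : ℝ))
    (ε : ℝ) (hε0 : 0 < ε) (hε : ε < 1 / 2)
    (η : ℝ) (hη0 : 1 / 2 < η) (hη1 : η < 1)
    (δ₂ : ℝ) (hδ₂ : δ₂ = (1 - η) * ε / ((n : ℝ) ^ 2 * Real.sqrt (6 * ((n : ℝ) ^ 2 - 1))))
    (pt : F → ℝ) (hpt : pt = LF⁻¹ *ᵥ b)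
    (p : F → ℝ)
    (hsolve : Real.sqrt ((p - pt) ⬝ᵥ (LF *ᵥ (p - pt)))
        ≤ δ₂ * Real.sqrt (pt ⬝ᵥ (LF *ᵥ pt))) :
    ∀ i : F, pt i ≤ η →
      (1 - ε / 6) * (1 - pt i) ≤ 1 - p i ∧ 1 - p i ≤ (1 + ε / 6) * (1 - pt i) :=
  stmt12_general G hconn F S1 hS1ne hFS1 n hn hn2 LF hLF hPD hnn b hb ε hε0 η hη1 δ₂ hδ₂ pt hpt p
    hsolve
end

section
/- (Greedy guarantee) Under the grounded Laplacian setup, let k be a positive integer with k ≤ |Q|. Define the greedy sequence T₀ = ∅ and, for 0 ≤ i < k, T_{i+1} = T_i ∪ {e_i} where e_i ∈ Q \ T_i is an element maximizing H(T_i ∪ {e}) − H(T_i) over e ∈ Q \ T_i. Then H(T_k) − H(∅) ≥ (1 − 1/e) · (H(T*) − H(∅)), where T* maximizes H over all subsets P ⊆ Q with |P| = k, and e is Euler's number. -/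
/-!
Write `M_P = L_F + diag(c_P)` and `r = L_F 𝟏 - b`, which counts the neighbours outside `F ∪ S₁`
and so is nonnegative. Since `M_P 𝟏 - (b + c_P) = r`, we get `H(P) = |F| - 𝟏ᵀ M_P⁻¹ r`, and adding
an edge ending at `j ∈ F` is the rank-one update `M_P + E_jj`. Each `M_P` is a positive definite
Z-matrix, hence `B = M_P⁻¹ ≥ 0`, and Sherman–Morrison gives the gain
`(𝟏ᵀ B)_j (B r)_j / (1 + B_jj) ≥ 0`. Updating twice and using the path-product inequality
`B_ij B_jl ≤ B_jj B_il` shows that this gain can only shrink, so `H` is monotone and submodular on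
subsets of `Q`. The classical greedy argument then gives
`H(T*) - H(T_{i+1}) ≤ (1 - 1/k) (H(T*) - H(T_i))`, and `(1 - 1/k)^k ≤ 1/e`.
-/

open Matrix Finset

theorem nonneg_of_forall_nonneg_add_mul {a b : ℝ} (h : ∀ t, 0 ≤ t → 0 ≤ a + t * b) : 0 ≤ b := by
  by_contra! hb
  have ht : (|a| + 1) / -b * b = -(|a| + 1) := by
    rw [div_mul_eq_mul_div, mul_div_assoc, div_neg, div_self hb.ne]; ring
  have := h ((|a| + 1) / -b) (by have := neg_pos.2 hb; positivity)
  linarith [le_abs_self a]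

theorem le_exp_neg_one_mul_of_le_mul_sub {k : ℕ} (hk : 0 < k) {δ : ℕ → ℝ}
    (hstep : ∀ i < k, δ i ≤ k * (δ i - δ (i + 1))) (h0 : 0 ≤ δ 0) :
    δ k ≤ Real.exp (-1) * δ 0 := by
  have hk' : (0 : ℝ) < k := by exact_mod_cast hk
  have hq : 0 ≤ 1 - 1 / (k : ℝ) := by
    rw [sub_nonneg, div_le_one hk']; exact_mod_cast hk
  have hpow : ∀ i ≤ k, δ i ≤ (1 - 1 / (k : ℝ)) ^ i * δ 0 := by
    intro i hi
    induction i with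
    | zero => simp
    | succ i ih =>
      have h := hstep i (by omega)
      calc δ (i + 1) ≤ (1 - 1 / (k : ℝ)) * δ i := by
            rw [sub_mul, one_mul, one_div_mul_eq_div, le_sub_comm, div_le_iff₀' hk']; exact h
        _ ≤ (1 - 1 / (k : ℝ)) * ((1 - 1 / (k : ℝ)) ^ i * δ 0) := by gcongr; exact ih (by omega)
        _ = (1 - 1 / (k : ℝ)) ^ (i + 1) * δ 0 := by ring
  calc δ k ≤ (1 - 1 / (k : ℝ)) ^ k * δ 0 := hpow k le_rfl
    _ ≤ Real.exp (-1) * δ 0 := by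
        gcongr; exact Real.one_sub_div_pow_le_exp_neg (by exact_mod_cast hk)

/-- The inequality behind submodularity: the left side is the gain `p x / (1 + a)` of a site after
another site has been added, written out with Sherman–Morrison. -/
theorem rankOne_update_gain_le {p q x y t a b : ℝ} (hp : 0 ≤ p) (hq : 0 ≤ q) (hx : 0 ≤ x)
    (hy : 0 ≤ y) (ht : 0 ≤ t) (ha : 0 ≤ a) (hb : 0 ≤ b) (htx : t * x ≤ a * y)
    (hty : t * y ≤ b * x) (hden : 0 < 1 + (a - t * t / (1 + b))) :
    (p - q * t / (1 + b)) * (x - t * y / (1 + b)) / (1 + (a - t * t / (1 + b)))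
      ≤ p * x / (1 + a) := by
  have h₁ : 0 ≤ p * (1 + b) * t * ((1 + a) * y - t * x) := by
    have : 0 ≤ (1 + a) * y - t * x := by linarith
    positivity
  have h₂ : 0 ≤ (1 + a) * q * t * ((1 + b) * x - t * y) := by
    have : 0 ≤ (1 + b) * x - t * y := by linarith
    positivity
  rw [div_le_div_iff₀ hden (by linarith)]
  field_simp
  linear_combination h₁ + h₂

def Matrix.IsZMatrix_s15 {n : Type*} (M : Matrix n n ℝ) : Prop := ∀ i j, i ≠ j → M i j ≤ 0

namespace Matrix

variable {n : Type*} {M : Matrix n n ℝ}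

theorem IsZMatrix_s15.submatrix {m : Type*} (hZ : M.IsZMatrix_s15) {f : m → n}
    (hf : Function.Injective f) : (M.submatrix f f).IsZMatrix_s15 :=
  fun i j hij => hZ (f i) (f j) (hf.ne hij)

theorem IsZMatrix_s15.add_diagonal [DecidableEq n] (hZ : M.IsZMatrix_s15) (d : n → ℝ) :
    (M + diagonal d).IsZMatrix_s15 :=
  fun i j hij => by simpa [diagonal_apply_ne _ hij] using hZ i j hij

theorem IsZMatrix_s15.add_single [DecidableEq n] (hZ : M.IsZMatrix_s15) (j : n) (a : ℝ) :
    (M + single j j a).IsZMatrix_s15 := by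
  rw [← diagonal_single]
  exact hZ.add_diagonal _

theorem add_diagonal_add_single [DecidableEq n] (M : Matrix n n ℝ) (d : n → ℝ) (j : n) (a : ℝ) :
    M + diagonal (d + Pi.single j a) = M + diagonal d + single j j a := by
  rw [add_assoc, ← diagonal_single, diagonal_add]
  rfl

theorem PosDef.add_single_posDef [DecidableEq n] (hM : M.PosDef) (j : n) {a : ℝ} (ha : 0 ≤ a) :
    (M + single j j a).PosDef := by
  rw [← diagonal_single]
  exact hM.add_posSemidef (.diagonal (Pi.single_nonneg.2 ha))

variable [Fintype n]

/-- The negative part `y = min x 0` satisfies `y ⬝ M y ≤ y ⬝ M x ≤ 0`, because `M` couples it to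
the positive part `x - y` only through nonpositive off-diagonal entries. -/
theorem PosDef.nonneg_of_mulVec_nonneg (hM : M.PosDef) (hZ : M.IsZMatrix_s15) {x : n → ℝ}
    (hx : 0 ≤ M *ᵥ x) : 0 ≤ x := by
  set y : n → ℝ := fun i => min (x i) 0
  have hy : ∀ i, y i ≤ 0 := fun i => min_le_right _ _
  have hcross : 0 ≤ y ⬝ᵥ (M *ᵥ (x - y)) := by
    rw [dot_mulVec_eq_sum_sum]
    refine Finset.sum_nonneg fun j _ => Finset.sum_nonneg fun i _ => ?_
    rcases eq_or_ne i j with rfl | hij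
    · have : y i * (x i - y i) = 0 := by
        simp only [y]; rcases le_total (x i) 0 with h | h <;> simp [h]
      simp [mul_right_comm _ (M i i), this]
    · exact mul_nonneg (mul_nonneg_of_nonpos_of_nonpos (hy i) (hZ i j hij))
        (sub_nonneg.2 (min_le_left _ _))
  have hyx : y ⬝ᵥ (M *ᵥ x) ≤ 0 :=
    Finset.sum_nonpos fun i _ => mul_nonpos_of_nonpos_of_nonneg (hy i) (hx i)
  have hy0 : y = 0 := by
    by_contra hne
    have := hM.dotProduct_mulVec_pos hne
    rw [star_trivial] at this
    rw [← sub_add_cancel x y, mulVec_add, dotProduct_add] at hyx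
    linarith
  intro i
  simpa [y] using congrFun hy0 i

theorem mul_mulVec_apply_le {B : Matrix n n ℝ} (hB : ∀ i j l, B i j * B j l ≤ B j j * B i l)
    {r : n → ℝ} (hr : 0 ≤ r) (i j : n) : B j i * (B *ᵥ r) i ≤ B i i * (B *ᵥ r) j := by
  simp only [mulVec, dotProduct, Finset.mul_sum, ← mul_assoc]
  exact Finset.sum_le_sum fun l _ => mul_le_mul_of_nonneg_right (hB j i l) (hr l)

variable [DecidableEq n]

theorem PosDef.inv_nonneg (hM : M.PosDef) (hZ : M.IsZMatrix_s15) (i j : n) : 0 ≤ M⁻¹ i j := by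
  have hcol : M *ᵥ (fun i => M⁻¹ i j) = fun i => (1 : Matrix n n ℝ) i j := by
    ext i; rw [← mul_nonsing_inv M hM.det_pos.ne'.isUnit, mul_apply]; rfl
  refine hM.nonneg_of_mulVec_nonneg hZ (x := fun i => M⁻¹ i j) (hcol ▸ fun i => ?_) i
  by_cases h : i = j <;> simp [one_apply, h]

theorem inv_mulVec_eq_sub (hM : IsUnit M.det) (v w : n → ℝ) :
    M⁻¹ *ᵥ v = w - M⁻¹ *ᵥ (M *ᵥ w - v) := by
  rw [mulVec_sub, mulVec_mulVec, nonsing_inv_mul _ hM, one_mulVec, sub_sub_cancel]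

theorem inv_add_single (hM : IsUnit M.det) (j : n) (a : ℝ) (ha : 1 + a * M⁻¹ j j ≠ 0) :
    (M + single j j a)⁻¹ =
      M⁻¹ - (a / (1 + a * M⁻¹ j j)) • vecMulVec (fun i => M⁻¹ i j) (M⁻¹ j) := by
  set B := M⁻¹
  set E : Matrix n n ℝ := single j j 1
  set β := a / (1 + a * B j j)
  have hvec : vecMulVec (fun i => B i j) (B j) = B * E * B := by
    ext i l; simp [E, vecMulVec_apply, Matrix.mul_apply, single, ite_and]
  have hMB : M * B = 1 := mul_nonsing_inv M hM
  have hEBE : E * B * E = B j j • E := by simp [E, single_mul_mul_single, smul_single]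
  have hE : single j j a = a • E := by simp [E, smul_single]
  have hβ : β * (1 + a * B j j) = a := div_mul_cancel₀ _ ha
  apply inv_eq_right_inv
  rw [hvec, hE]
  calc (M + a • E) * (B - β • (B * E * B))
      = M * B - β • (M * B * E * B) + a • (E * B) - (a * β) • (E * B * E * B) := by
        simp only [Matrix.add_mul, Matrix.mul_sub, Matrix.mul_smul, Matrix.smul_mul,
          Matrix.mul_assoc]
        module
    _ = 1 + (a - β * (1 + a * B j j)) • (E * B) := by
        rw [hMB, hEBE, Matrix.one_mul, Matrix.smul_mul]; module
    _ = 1 := by rw [hβ, sub_self, zero_smul, add_zero]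

theorem inv_add_single_apply (hM : IsUnit M.det) (j : n) (a : ℝ) (ha : 1 + a * M⁻¹ j j ≠ 0)
    (i l : n) :
    (M + single j j a)⁻¹ i l = M⁻¹ i l - a / (1 + a * M⁻¹ j j) * (M⁻¹ i j * M⁻¹ j l) := by
  simp [inv_add_single hM j a ha, vecMulVec_apply]

theorem vecMul_inv_add_single_apply (hM : IsUnit M.det) (k : n) (hk : 1 + M⁻¹ k k ≠ 0)
    (u : n → ℝ) (j : n) :
    (u ᵥ* (M + single k k 1)⁻¹) j = (u ᵥ* M⁻¹) j - (u ᵥ* M⁻¹) k * M⁻¹ k j / (1 + M⁻¹ k k) := by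
  rw [inv_add_single hM k 1 (by rwa [one_mul]), vecMul_sub, vecMul_smul, vecMul_vecMulVec]
  simp only [Pi.sub_apply, Pi.smul_apply, smul_eq_mul, one_mul]
  change _ - _ * ((u ᵥ* M⁻¹) k * M⁻¹ k j) = _
  ring

theorem inv_add_single_mulVec_apply (hM : IsUnit M.det) (k : n) (hk : 1 + M⁻¹ k k ≠ 0)
    (r : n → ℝ) (j : n) :
    ((M + single k k 1)⁻¹ *ᵥ r) j = (M⁻¹ *ᵥ r) j - M⁻¹ j k * (M⁻¹ *ᵥ r) k / (1 + M⁻¹ k k) := by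
  rw [inv_add_single hM k 1 (by rwa [one_mul]), sub_mulVec, smul_mulVec, vecMulVec_mulVec]
  simp only [Pi.sub_apply, Pi.smul_apply, smul_eq_mul, one_mul, op_smul_eq_smul]
  change _ - _ * ((M⁻¹ *ᵥ r) k * M⁻¹ j k) = _
  ring

/-- Entrywise nonnegativity of `(M + a E_jj)⁻¹` for every `a ≥ 0`, read through Sherman–Morrison,
becomes the path-product inequality in the limit `a → ∞`. -/
theorem PosDef.inv_mul_inv_le (hM : M.PosDef) (hZ : M.IsZMatrix_s15) (i j l : n) :
    M⁻¹ i j * M⁻¹ j l ≤ M⁻¹ j j * M⁻¹ i l := by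
  rw [← sub_nonneg]
  refine nonneg_of_forall_nonneg_add_mul (a := M⁻¹ i l) fun a ha => ?_
  have hpos : 0 < 1 + a * M⁻¹ j j := by nlinarith [hM.inv_nonneg hZ j j]
  have h := (hM.add_single_posDef j ha).inv_nonneg (hZ.add_single j a) i l
  rw [inv_add_single_apply hM.det_pos.ne'.isUnit j a hpos.ne'] at h
  refine (mul_nonneg h hpos.le).trans_eq ?_
  field_simp
  ring

theorem dotProduct_inv_add_single_mulVec (hM : IsUnit M.det) (j : n) (hj : 1 + M⁻¹ j j ≠ 0)
    (u r : n → ℝ) :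
    u ⬝ᵥ ((M + single j j 1)⁻¹ *ᵥ r) =
      u ⬝ᵥ (M⁻¹ *ᵥ r) - (u ᵥ* M⁻¹) j * (M⁻¹ *ᵥ r) j / (1 + M⁻¹ j j) := by
  rw [inv_add_single hM j 1 (by rwa [one_mul]), sub_mulVec, dotProduct_sub, smul_mulVec,
    vecMulVec_mulVec, dotProduct_smul]
  simp only [op_smul_eq_smul, dotProduct_smul, smul_eq_mul, one_mul]
  change _ - _ * ((M⁻¹ *ᵥ r) j * (u ᵥ* M⁻¹) j) = _
  ring

theorem PosDef.dotProduct_inv_add_single_mulVec_le (hM : M.PosDef) (hZ : M.IsZMatrix_s15)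
    {u r : n → ℝ} (hu : 0 ≤ u) (hr : 0 ≤ r) (j : n) :
    u ⬝ᵥ ((M + single j j 1)⁻¹ *ᵥ r) ≤ u ⬝ᵥ (M⁻¹ *ᵥ r) := by
  have hB := hM.inv_nonneg hZ
  rw [dotProduct_inv_add_single_mulVec hM.det_pos.ne'.isUnit j (by linarith [hB j j]),
    sub_le_self_iff]
  exact div_nonneg (mul_nonneg (dotProduct_nonneg_of_nonneg hu (hB · j))
    (dotProduct_nonneg_of_nonneg (hB j) hr)) (by linarith [hB j j])

theorem PosDef.dotProduct_inv_add_single_mulVec_sub_le (hM : M.PosDef) (hZ : M.IsZMatrix_s15)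
    {u r : n → ℝ} (hu : 0 ≤ u) (hr : 0 ≤ r) (j k : n) :
    u ⬝ᵥ ((M + single k k 1)⁻¹ *ᵥ r) - u ⬝ᵥ ((M + single k k 1 + single j j 1)⁻¹ *ᵥ r) ≤
      u ⬝ᵥ (M⁻¹ *ᵥ r) - u ⬝ᵥ ((M + single j j 1)⁻¹ *ᵥ r) := by
  have hM' := hM.add_single_posDef k zero_le_one
  have hU := hM.det_pos.ne'.isUnit
  have hB := hM.inv_nonneg hZ
  have hB' := hM'.inv_nonneg (hZ.add_single k 1)
  have hsymm : M⁻¹ k j = M⁻¹ j k := by simpa using hM.inv.isHermitian.apply j k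
  have hk : 1 + M⁻¹ k k ≠ 0 := by linarith [hB k k]
  have hupdate : (M + single k k 1 : Matrix n n ℝ)⁻¹ j j =
      M⁻¹ j j - M⁻¹ j k * M⁻¹ j k / (1 + M⁻¹ k k) := by
    rw [inv_add_single_apply hU k 1 (by rwa [one_mul]), hsymm, one_mul, one_div_mul_eq_div]
  have hden : 0 < 1 + (M⁻¹ j j - M⁻¹ j k * M⁻¹ j k / (1 + M⁻¹ k k)) := by
    linarith [hupdate ▸ hB' j j]
  rw [dotProduct_inv_add_single_mulVec hM'.det_pos.ne'.isUnit j (by linarith [hB' j j]),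
    dotProduct_inv_add_single_mulVec hU j (by linarith [hB j j]), sub_sub_cancel, sub_sub_cancel,
    vecMul_inv_add_single_apply hU k hk, inv_add_single_mulVec_apply hU k hk, hupdate, hsymm]
  have hw := mul_mulVec_apply_le (hM.inv_mul_inv_le hZ) hr
  have hs (i : n) : 0 ≤ (u ᵥ* M⁻¹) i := dotProduct_nonneg_of_nonneg hu (hB · i)
  have hw0 (i : n) : 0 ≤ (M⁻¹ *ᵥ r) i := dotProduct_nonneg_of_nonneg (hB i) hr
  exact rankOne_update_gain_le (hs j) (hs k) (hw0 j) (hw0 k) (hB j k) (hB j j) (hB k k)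
    (hsymm ▸ hw j k) (hw k j) hden

theorem PosDef.one_dotProduct_inv_add_diagonal_mulVec (hM : M.PosDef) {d : n → ℝ} (hd : 0 ≤ d)
    (b : n → ℝ) :
    1 ⬝ᵥ ((M + diagonal d)⁻¹ *ᵥ (b + d)) =
      (1 : n → ℝ) ⬝ᵥ 1 - 1 ⬝ᵥ ((M + diagonal d)⁻¹ *ᵥ (M *ᵥ 1 - b)) := by
  have hr : (M + diagonal d) *ᵥ 1 - (b + d) = M *ᵥ 1 - b := by
    ext i; simp [add_mulVec, mulVec_diagonal]
  rw [inv_mulVec_eq_sub (hM.add_posSemidef (.diagonal hd)).det_pos.ne'.isUnit _ 1, hr,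
    dotProduct_sub]

end Matrix

namespace SimpleGraph

variable {V : Type*} [Fintype V] [DecidableEq V] (G : SimpleGraph V) [DecidableRel G.Adj]

theorem lapMatrix_isZMatrix : (G.lapMatrix ℝ).IsZMatrix_s15 := fun i j hij => by
  by_cases h : G.Adj i j <;> simp [lapMatrix, degMatrix, diagonal_apply_ne _ hij, h]

theorem card_filter_adj_le_sum_lapMatrix {F S : Finset V} (hFS : Disjoint F S) {i : V}
    (hi : i ∈ F) : (#{a ∈ S | G.Adj a i} : ℝ) ≤ ∑ v ∈ F, G.lapMatrix ℝ i v := by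
  have hcompl : ∑ v ∈ Fᶜ, G.lapMatrix ℝ i v = -∑ v ∈ Fᶜ, G.adjMatrix ℝ i v := by
    rw [← sum_neg_distrib]
    refine sum_congr rfl fun v hv => ?_
    have hiv : i ≠ v := by rintro rfl; exact mem_compl.1 hv hi
    simp [lapMatrix, degMatrix, diagonal_apply_ne _ hiv]
  have hrow : ∑ v, G.lapMatrix ℝ i v = 0 := by
    simpa [mulVec, dotProduct] using congrFun (G.lapMatrix_mulVec_const_eq_zero (R := ℝ)) i
  rw [← sum_add_sum_compl F, hcompl] at hrow
  calc (#{a ∈ S | G.Adj a i} : ℝ) = ∑ v ∈ S, G.adjMatrix ℝ i v := by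
        simp [adjMatrix_apply, sum_boole, G.adj_comm]
    _ ≤ ∑ v ∈ Fᶜ, G.adjMatrix ℝ i v :=
        sum_le_sum_of_subset_of_nonneg (subset_compl_iff_disjoint_left.2 hFS) fun v _ _ => by
          by_cases h : G.Adj i v <;> simp [h]
    _ = ∑ v ∈ F, G.lapMatrix ℝ i v := by linarith

end SimpleGraph

section SetFunction

variable {α : Type*} [DecidableEq α]

theorem Finset.monotoneOn_Iic_of_le_insert {β : Type*} [Preorder β] {S : Finset α}
    {g : Finset α → β} (h : ∀ P ⊆ S, ∀ a ∈ S, a ∉ P → g P ≤ g (insert a P)) :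
    MonotoneOn g (Set.Iic S) := by
  have hmono : Monotone fun P => g (P ∩ S) := by
    refine Finset.monotone_iff_forall_le_insert.2 fun P a ha => ?_
    by_cases haS : a ∈ S
    · rw [insert_inter_of_mem haS]
      exact h _ inter_subset_right a haS fun h' => ha (mem_of_mem_inter_left h')
    · rw [insert_inter_of_notMem haS]
  intro A hA B hB hAB
  simpa [inter_eq_left.2 (Set.mem_Iic.1 hA), inter_eq_left.2 (Set.mem_Iic.1 hB)] using hmono hAB

theorem Finset.antitoneOn_Iic_of_insert_le {β : Type*} [Preorder β] {S : Finset α}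
    {g : Finset α → β} (h : ∀ P ⊆ S, ∀ a ∈ S, a ∉ P → g (insert a P) ≤ g P) :
    AntitoneOn g (Set.Iic S) :=
  Finset.monotoneOn_Iic_of_le_insert (β := βᵒᵈ) h

def SubmodularOn (Q : Finset α) (H : Finset α → ℝ) : Prop :=
  ∀ e ∈ Q, AntitoneOn (fun P => H (insert e P) - H P) (Set.Iic (Q.erase e))

variable {Q : Finset α} {H : Finset α → ℝ}

theorem SubmodularOn.sub_le_sum (hH : SubmodularOn Q H) {A R : Finset α} (hA : A ⊆ Q)
    (hR : R ⊆ Q) : H (A ∪ R) - H A ≤ ∑ e ∈ R, (H (insert e A) - H A) := by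
  induction R using Finset.induction_on with
  | empty => simp
  | insert f R hf ih =>
    have hfQ := hR (mem_insert_self f R)
    have hRQ := (subset_insert f R).trans hR
    rw [union_insert, sum_insert hf]
    have hstep : H (insert f (A ∪ R)) - H (A ∪ R) ≤ H (insert f A) - H A := by
      by_cases hfA : f ∈ A
      · simp [insert_eq_of_mem hfA, insert_eq_of_mem (mem_union_left R hfA)]
      · have hfAR : f ∉ A ∪ R := by simp [hfA, hf]
        exact hH f hfQ (subset_erase.2 ⟨hA, hfA⟩) (subset_erase.2 ⟨union_subset hA hRQ, hfAR⟩)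
          subset_union_left
    linarith [ih hRQ]

theorem SubmodularOn.sub_le_card_mul (hmono : MonotoneOn H (Set.Iic Q)) (hsub : SubmodularOn Q H)
    {T Tstar : Finset α} (hT : T ⊆ Q) (hTstar : Tstar ⊆ Q) {e : α} (he : e ∈ Q)
    (hmax : ∀ e' ∈ Q \ T, H (insert e' T) - H T ≤ H (insert e T) - H T) :
    H Tstar - H T ≤ #Tstar * (H (insert e T) - H T) := by
  have hgain : ∀ e' ∈ Tstar, H (insert e' T) - H T ≤ H (insert e T) - H T := by
    intro e' he'
    by_cases he'T : e' ∈ T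
    · rw [insert_eq_of_mem he'T, sub_self, sub_nonneg]
      exact hmono hT (insert_subset he hT) (subset_insert e T)
    · exact hmax e' (mem_sdiff.2 ⟨hTstar he', he'T⟩)
  calc H Tstar - H T ≤ H (T ∪ Tstar) - H T := by
        gcongr; exact hmono hTstar (union_subset hT hTstar) subset_union_right
    _ ≤ ∑ e' ∈ Tstar, (H (insert e' T) - H T) := hsub.sub_le_sum hT hTstar
    _ ≤ #Tstar * (H (insert e T) - H T) := by
        rw [← nsmul_eq_mul, ← sum_const]; exact sum_le_sum hgain

theorem SubmodularOn.greedy_guarantee (hmono : MonotoneOn H (Set.Iic Q))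
    (hsub : SubmodularOn Q H) {k : ℕ} (hk : 0 < k) {T : ℕ → Finset α} (hT0 : T 0 = ∅)
    (hgreedy : ∀ i < k, ∃ e ∈ Q \ T i, T (i + 1) = insert e (T i) ∧
      ∀ e' ∈ Q \ T i, H (insert e' (T i)) - H (T i) ≤ H (insert e (T i)) - H (T i))
    {Tstar : Finset α} (hTstar : Tstar ⊆ Q) (hcard : #Tstar = k) :
    (1 - 1 / Real.exp 1) * (H Tstar - H ∅) ≤ H (T k) - H ∅ := by
  have hTQ : ∀ i ≤ k, T i ⊆ Q := by
    intro i hi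
    induction i with
    | zero => simp [hT0]
    | succ i ih =>
      obtain ⟨e, he, hTe, -⟩ := hgreedy i (by omega)
      rw [hTe]
      exact insert_subset (mem_sdiff.1 he).1 (ih (by omega))
  have hstep : ∀ i < k,
      H Tstar - H (T i) ≤ k * ((H Tstar - H (T i)) - (H Tstar - H (T (i + 1)))) := by
    intro i hi
    obtain ⟨e, he, hTe, hmax⟩ := hgreedy i hi
    have := hsub.sub_le_card_mul hmono (hTQ i hi.le) hTstar (mem_sdiff.1 he).1 hmax
    rw [hcard] at this
    rw [hTe]
    linarith
  have h0 : 0 ≤ H Tstar - H (T 0) :=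
    sub_nonneg.2 (hmono (hT0 ▸ empty_subset _) hTstar (hT0 ▸ empty_subset _))
  have hdecay := le_exp_neg_one_mul_of_le_mul_sub hk (δ := fun i => H Tstar - H (T i)) hstep h0
  simp only [hT0] at hdecay
  rw [one_div, ← Real.exp_neg]
  linarith

end SetFunction

section Opinion

variable {ι α : Type*} [Fintype ι] [DecidableEq ι] [DecidableEq α] {L : Matrix ι ι ℝ} {b : ι → ℝ}
  {Q : Finset α} {c : Finset α → ι → ℝ} {H : Finset α → ℝ} {site : α → ι}

theorem monotoneOn_opinion (hL : L.PosDef) (hZ : L.IsZMatrix_s15) (hb : b ≤ L *ᵥ 1)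
    (hc0 : ∀ P, 0 ≤ c P) (hc : ∀ P, ∀ e ∈ Q, e ∉ P → c (insert e P) = c P + Pi.single (site e) 1)
    (hH : ∀ P ⊆ Q, H P = 1 ⬝ᵥ ((L + diagonal (c P))⁻¹ *ᵥ (b + c P))) :
    MonotoneOn H (Set.Iic Q) := by
  refine Finset.monotoneOn_Iic_of_le_insert fun P hP e he heP => ?_
  rw [hH P hP, hH _ (insert_subset he hP), hL.one_dotProduct_inv_add_diagonal_mulVec (hc0 _),
    hL.one_dotProduct_inv_add_diagonal_mulVec (hc0 _), hc P e he heP, add_diagonal_add_single]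
  exact sub_le_sub_left ((hL.add_posSemidef (.diagonal (hc0 P))).dotProduct_inv_add_single_mulVec_le
    (hZ.add_diagonal _) (fun _ => zero_le_one) (sub_nonneg.2 hb) _) _

theorem submodularOn_opinion (hL : L.PosDef) (hZ : L.IsZMatrix_s15) (hb : b ≤ L *ᵥ 1)
    (hc0 : ∀ P, 0 ≤ c P) (hc : ∀ P, ∀ e ∈ Q, e ∉ P → c (insert e P) = c P + Pi.single (site e) 1)
    (hH : ∀ P ⊆ Q, H P = 1 ⬝ᵥ ((L + diagonal (c P))⁻¹ *ᵥ (b + c P))) :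
    SubmodularOn Q H := by
  intro e he
  refine Finset.antitoneOn_Iic_of_insert_le fun P hP f hf hfP => ?_
  have hPQ : P ⊆ Q := hP.trans (erase_subset e Q)
  have heP : e ∉ P := fun h => by simpa using hP h
  have hfQ : f ∈ Q := mem_of_mem_erase hf
  have hefP : e ∉ insert f P := by
    rw [mem_insert, not_or]; exact ⟨(ne_of_mem_erase hf).symm, heP⟩
  have hfPQ := insert_subset hfQ hPQ
  simp only [hH _ (insert_subset he hfPQ), hH _ hfPQ, hH _ (insert_subset he hPQ), hH _ hPQ,
    hL.one_dotProduct_inv_add_diagonal_mulVec (hc0 _)]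
  rw [hc _ e he hefP, hc P f hfQ hfP, hc P e he heP, add_diagonal_add_single,
    add_diagonal_add_single, add_diagonal_add_single, sub_sub_sub_cancel_left,
    sub_sub_sub_cancel_left]
  exact (hL.add_posSemidef (.diagonal (hc0 P))).dotProduct_inv_add_single_mulVec_sub_le
    (hZ.add_diagonal _) (fun _ => zero_le_one) (sub_nonneg.2 hb) _ _

end Opinion

theorem card_filter_snd_insert {V : Type*} [DecidableEq V] {F : Finset V} {P : Finset (V × V)}
    {e : V × V} (heP : e ∉ P) (he : e.2 ∈ F) :
    (fun i : F => (#{x ∈ insert e P | x.2 = (i : V)} : ℝ)) =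
      (fun i : F => (#{x ∈ P | x.2 = (i : V)} : ℝ)) + Pi.single ⟨e.2, he⟩ 1 := by
  ext i
  rw [Pi.add_apply, filter_insert, Pi.single_apply]
  by_cases h : e.2 = i
  · rw [if_pos h, if_pos (Subtype.ext h.symm),
      card_insert_of_notMem fun hm => heP (mem_filter.1 hm).1]
    push_cast; rfl
  · rw [if_neg h, if_neg fun h' => h (congrArg Subtype.val h').symm, add_zero]

theorem stmt15_general {V : Type} [Fintype V] [DecidableEq V]
    (G : SimpleGraph V) [DecidableRel G.Adj]
    (F S1 : Finset V)
    (hFne : F.Nonempty)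
    (hFS1 : Disjoint F S1)
    (LF : Matrix F F ℝ)
    (hLF : LF = (G.lapMatrix ℝ).submatrix (fun i : F => (i : V)) (fun i : F => (i : V)))
    (hPD : LF.PosDef)
    (b : F → ℝ)
    (hb : ∀ i : F, b i = ((S1.filter fun a => G.Adj a (i : V)).card : ℝ))
    (Q : Finset (V × V))
    (hQ : ∀ e ∈ Q, e.1 ∈ S1 ∧ e.2 ∈ F ∧ ¬ G.Adj e.1 e.2)
    (c : Finset (V × V) → F → ℝ)
    (hc : ∀ P, ∀ i : F, c P i = ((P.filter fun e => e.2 = (i : V)).card : ℝ))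
    (H : Finset (V × V) → ℝ)
    (hH : ∀ P ⊆ Q, H P = (1 : F → ℝ) ⬝ᵥ ((LF + Matrix.diagonal (c P))⁻¹ *ᵥ (b + c P)))
    (k : ℕ) (hk0 : 0 < k)
    (T : ℕ → Finset (V × V)) (hT0 : T 0 = ∅)
    (hgreedy : ∀ i < k, ∃ e ∈ Q \ T i,
        T (i + 1) = insert e (T i) ∧
        ∀ e' ∈ Q \ T i, H (insert e' (T i)) - H (T i) ≤ H (insert e (T i)) - H (T i))
    (Tstar : Finset (V × V)) (hTstarQ : Tstar ⊆ Q) (hTstarcard : Tstar.card = k) :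
    (1 - 1 / Real.exp 1) * (H Tstar - H ∅) ≤ H (T k) - H ∅ := by
  obtain ⟨v₀, hv₀⟩ := hFne
  -- only evaluated on `Q`, where `e.2 ∈ F`
  let site : V × V → F := fun e => if h : e.2 ∈ F then ⟨e.2, h⟩ else ⟨v₀, hv₀⟩
  have hZ : LF.IsZMatrix_s15 := hLF ▸ G.lapMatrix_isZMatrix.submatrix Subtype.val_injective
  have hbL : b ≤ LF *ᵥ 1 := fun i => by
    rw [hb, hLF]
    simpa [mulVec, dotProduct, sum_attach F (G.lapMatrix ℝ i)] using
      G.card_filter_adj_le_sum_lapMatrix hFS1 i.2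
  have hc0 : ∀ P, 0 ≤ c P := fun P i => by rw [hc]; positivity
  have hcins : ∀ P, ∀ e ∈ Q, e ∉ P → c (insert e P) = c P + Pi.single (site e) 1 := by
    intro P e he heP
    simp only [funext (hc _), site, dif_pos (hQ e he).2.1]
    exact card_filter_snd_insert heP _
  exact (submodularOn_opinion hPD hZ hbL hc0 hcins hH).greedy_guarantee
    (monotoneOn_opinion hPD hZ hbL hc0 hcins hH) hk0 hT0 hgreedy hTstarQ hTstarcard

/-- **Greedy guarantee.** Under the grounded Laplacian setup, let `k` be a positive integer with
`k ≤ |Q|`.  Define the greedy sequence `T₀ = ∅` and, for `0 ≤ i < k`,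
`T_{i+1} = T_i ∪ {e_i}` where `e_i ∈ Q \ T_i` maximizes `H(T_i ∪ {e}) − H(T_i)` over
`e ∈ Q \ T_i`.  Then `H(T_k) − H(∅) ≥ (1 − 1/e)(H(T*) − H(∅))`, where `T*` maximizes `H`
over all subsets `P ⊆ Q` with `|P| = k`. -/
theorem stmt15 {V : Type} [Fintype V] [DecidableEq V]
    (G : SimpleGraph V) [DecidableRel G.Adj] (hconn : G.Connected)
    (F S0 S1 : Finset V)
    (hFne : F.Nonempty) (hS1ne : S1.Nonempty)
    (hFS0 : Disjoint F S0) (hFS1 : Disjoint F S1) (hS0S1 : Disjoint S0 S1)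
    (hcover : F ∪ S0 ∪ S1 = Finset.univ)
    (LF : Matrix F F ℝ)
    (hLF : LF = (G.lapMatrix ℝ).submatrix (fun i : F => (i : V)) (fun i : F => (i : V)))
    (hPD : LF.PosDef) (hnn : ∀ i j : F, 0 ≤ LF⁻¹ i j)
    (b : F → ℝ)
    (hb : ∀ i : F, b i = ((S1.filter fun a => G.Adj a (i : V)).card : ℝ))
    (Q : Finset (V × V))
    (hQ : ∀ e ∈ Q, e.1 ∈ S1 ∧ e.2 ∈ F ∧ ¬ G.Adj e.1 e.2)
    (c : Finset (V × V) → F → ℝ)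
    (hc : ∀ P, ∀ i : F, c P i = ((P.filter fun e => e.2 = (i : V)).card : ℝ))
    (H : Finset (V × V) → ℝ)
    (hH : ∀ P ⊆ Q, H P = (1 : F → ℝ) ⬝ᵥ ((LF + Matrix.diagonal (c P))⁻¹ *ᵥ (b + c P)))
    (k : ℕ) (hk0 : 0 < k) (hkQ : k ≤ Q.card)
    (T : ℕ → Finset (V × V)) (hT0 : T 0 = ∅)
    (hgreedy : ∀ i < k, ∃ e ∈ Q \ T i,
        T (i + 1) = insert e (T i) ∧
        ∀ e' ∈ Q \ T i, H (insert e' (T i)) - H (T i) ≤ H (insert e (T i)) - H (T i))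
    (Tstar : Finset (V × V)) (hTstarQ : Tstar ⊆ Q) (hTstarcard : Tstar.card = k)
    (hTstaropt : ∀ P ⊆ Q, P.card = k → H P ≤ H Tstar) :
    (1 - 1 / Real.exp 1) * (H Tstar - H ∅) ≤ H (T k) - H ∅ :=
  stmt15_general G F S1 hFne hFS1 LF hLF hPD b hb Q hQ c hc H hH k hk0 T hT0 hgreedy Tstar hTstarQ
    hTstarcard
end
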